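/- For fixed τ in the upper half-plane, integer a ≥ 0, s with Re(s) > 1 + a/2, and any nonzero integer n, the distribution relation holds: Σ_{t} K_a(s, τ, (z+t)/n, 0) = n^{2s-a} · K_a(s, τ, z, 0), where t ranges over a full set of representatives of (ℤ+ℤτ)/n(ℤ+ℤτ), i.e. t = j + kτ for j,k ∈ {0,...,n-1}, provided z ∉ ℤ+ℤτ. -/

import Mathlib

/-!
Write `ω + (z + t)/n = (nω + t + z)/n`. Dividing the argument of a summand by `n` multiplies
`conj(·)^a` by `n^{-a}` and `|·|^{2s}` by `n^{-2s}`, so the summand of `K_a((z+t)/n)` at `ω` is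
`n^{2s-a}` times the summand of `K_a(z)` at `nω + t`. As `t` runs over representatives of
`(ℤ+ℤτ)/n(ℤ+ℤτ)` and `ω` over `ℤ+ℤτ`, the point `nω + t` runs over `ℤ+ℤτ` exactly once, and the
series converge absolutely for `Re s > 1 + a/2`, so they may be regrouped along the cosets.
-/

open Complex

/-- The Kronecker-Eisenstein series `K_a(s,τ,z,0)` (terms with `ω+z = 0` omitted). -/
noncomputable def kroneckerEisenstein (τ : ℂ) (a : ℤ) (s z : ℂ) : ℂ :=
  ∑' p : ℤ × ℤ,
    if (p.1 : ℂ) + p.2 * τ + z = 0 then 0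
    else (starRingEnd ℂ ((p.1 : ℂ) + p.2 * τ + z)) ^ a /
      ((‖(p.1 : ℂ) + p.2 * τ + z‖ : ℝ) : ℂ) ^ (2 * s)

noncomputable def kroneckerEisensteinTerm (a : ℤ) (s w : ℂ) : ℂ :=
  if w = 0 then 0 else starRingEnd ℂ w ^ a / ((‖w‖ : ℝ) : ℂ) ^ (2 * s)

lemma kroneckerEisenstein_eq_tsum (τ : ℂ) (a : ℤ) (s z : ℂ) :
    kroneckerEisenstein τ a s z =
      ∑' p : ℤ × ℤ, kroneckerEisensteinTerm a s (p.1 + p.2 * τ + z) := rfl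

lemma norm_kroneckerEisensteinTerm (a : ℤ) (s w : ℂ) (h : (a : ℝ) ≠ 2 * s.re) :
    ‖kroneckerEisensteinTerm a s w‖ = ‖w‖ ^ ((a : ℝ) - 2 * s.re) := by
  rcases eq_or_ne w 0 with rfl | hw
  · simp [kroneckerEisensteinTerm, Real.zero_rpow (sub_ne_zero.mpr h)]
  have hw' : 0 < ‖w‖ := norm_pos_iff.mpr hw
  rw [kroneckerEisensteinTerm, if_neg hw, norm_div, norm_zpow, Complex.norm_conj,
    Complex.norm_cpow_eq_rpow_re_of_pos hw', Real.rpow_sub hw', Real.rpow_intCast]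
  simp

lemma kroneckerEisensteinTerm_div_ofReal (a : ℤ) (s w : ℂ) {r : ℝ} (hr : 0 < r) :
    kroneckerEisensteinTerm a s (w / r) =
      (r : ℂ) ^ (2 * s - a) * kroneckerEisensteinTerm a s w := by
  rcases eq_or_ne w 0 with rfl | hw
  · simp [kroneckerEisensteinTerm]
  have hr' : (r : ℂ) ≠ 0 := ofReal_ne_zero.mpr hr.ne'
  have hnorm : ‖w / r‖ = ‖w‖ / r := by
    rw [norm_div, norm_real, Real.norm_of_nonneg hr.le]
  rw [kroneckerEisensteinTerm, kroneckerEisensteinTerm, if_neg (div_ne_zero hw hr'), if_neg hw,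
    hnorm, ofReal_div, div_cpow_ofReal_nonneg (norm_nonneg w) hr.le, map_div₀, conj_ofReal,
    div_zpow, cpow_sub _ _ hr', cpow_intCast]
  field_simp

lemma summable_norm_add_mul_add_rpow {τ : ℂ} (hτ : 0 < τ.im) (z : ℂ) {r : ℝ} (hr : r < -2) :
    Summable fun p : ℤ × ℤ => ‖(p.1 : ℂ) + p.2 * τ + z‖ ^ r := by
  let L : PeriodPair := ⟨1, τ, LinearIndependent.pair_iff.mpr fun u v huv => by
    have hv : v * τ.im = 0 := by simpa using congrArg Complex.im huv
    have hv0 : v = 0 := (mul_eq_zero.mp hv).resolve_right hτ.ne'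
    subst hv0
    simpa using huv⟩
  have hL := ZLattice.summable_norm_sub_rpow L.lattice r (by simpa using hr) (-z)
  refine (L.latticeEquivProd.symm.toEquiv.summable_iff.mpr hL).congr fun p => ?_
  simp [L, PeriodPair.latticeEquiv_symm_apply]

lemma summable_kroneckerEisensteinTerm {τ : ℂ} (hτ : 0 < τ.im) {a : ℤ} {s : ℂ}
    (hs : 1 + (a : ℝ) / 2 < s.re) (z : ℂ) :
    Summable fun p : ℤ × ℤ => kroneckerEisensteinTerm a s (p.1 + p.2 * τ + z) := by
  refine .of_norm ((summable_norm_add_mul_add_rpow hτ z (r := a - 2 * s.re) (by linarith)).congr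
    fun p => (norm_kroneckerEisensteinTerm a s _ (by linarith)).symm)

theorem tsum_eq_sum_range_sum_range_tsum {E : Type*} [AddCommGroup E] [UniformSpace E]
    [IsUniformAddGroup E] [CompleteSpace E] [T2Space E] {f : ℤ × ℤ → E} (hf : Summable f)
    (n : ℕ) [NeZero n] :
    ∑' q, f q = ∑ j ∈ Finset.range n, ∑ k ∈ Finset.range n,
      ∑' p : ℤ × ℤ, f (p.1 * n + j, p.2 * n + k) := by
  let e : (Fin n × Fin n) × (ℤ × ℤ) ≃ ℤ × ℤ :=
    (Equiv.prodComm _ _).trans ((Equiv.prodProdProdComm ℤ ℤ (Fin n) (Fin n)).trans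
      ((Int.divModEquiv n).symm.prodCongr (Int.divModEquiv n).symm))
  have hfe : HasSum (f ∘ e) (∑' q, f q) := e.hasSum_iff.mpr hf.hasSum
  have := (hfe.prod_fiberwise fun b => (hf.comp_injective
    (e.injective.comp (Prod.mk_right_injective b))).hasSum).unique (hasSum_fintype _)
  rw [this, Fintype.sum_prod_type, ← Fin.sum_univ_eq_sum_range]
  refine Finset.sum_congr rfl fun j _ => ?_
  rw [← Fin.sum_univ_eq_sum_range]
  rfl

lemma kroneckerEisenstein_add_div_natCast (τ : ℂ) (a : ℤ) (s z : ℂ) (j k : ℤ) {n : ℕ}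
    (hn : 0 < n) :
    kroneckerEisenstein τ a s ((z + j + k * τ) / n) = (n : ℂ) ^ (2 * s - a) *
      ∑' p : ℤ × ℤ,
        kroneckerEisensteinTerm a s (((p.1 * n + j : ℤ) : ℂ) + (p.2 * n + k : ℤ) * τ + z) := by
  rw [kroneckerEisenstein_eq_tsum, ← tsum_mul_left]
  refine tsum_congr fun p => ?_
  have hn' : (n : ℂ) ≠ 0 := Nat.cast_ne_zero.mpr hn.ne'
  have harg : (p.1 : ℂ) + p.2 * τ + (z + j + k * τ) / n =
      (((p.1 * n + j : ℤ) : ℂ) + (p.2 * n + k : ℤ) * τ + z) / ((n : ℝ) : ℂ) := by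
    push_cast
    field_simp
    ring
  rw [harg, kroneckerEisensteinTerm_div_ofReal _ _ _ (Nat.cast_pos.mpr hn), ofReal_natCast]

theorem kroneckerEisenstein_distribution_general (τ : ℂ) (hτ : 0 < τ.im) (a : ℕ) (s : ℂ)
    (hs : 1 + (a : ℝ) / 2 < s.re) (n : ℕ) (hn : 0 < n) (z : ℂ) :
    ∑ j ∈ Finset.range n, ∑ k ∈ Finset.range n,
        kroneckerEisenstein τ a s ((z + (j : ℂ) + (k : ℂ) * τ) / n) =
      (n : ℂ) ^ (2 * s - (a : ℂ)) * kroneckerEisenstein τ a s z := by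
  have : NeZero n := ⟨hn.ne'⟩
  have hs' : 1 + ((a : ℤ) : ℝ) / 2 < s.re := by rwa [Int.cast_natCast]
  rw [kroneckerEisenstein_eq_tsum,
    tsum_eq_sum_range_sum_range_tsum (summable_kroneckerEisensteinTerm hτ hs' z) n]
  simp_rw [Finset.mul_sum]
  refine Finset.sum_congr rfl fun j _ => Finset.sum_congr rfl fun k _ => ?_
  exact_mod_cast kroneckerEisenstein_add_div_natCast τ a s z j k hn

/-- Distribution relation:
`Σ_{t ∈ (ℤ+ℤτ)/n(ℤ+ℤτ)} K_a(s, τ, (z+t)/n, 0) = n^{2s-a} K_a(s, τ, z, 0)` for `z ∉ ℤ+ℤτ`. -/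
theorem kroneckerEisenstein_distribution (τ : ℂ) (hτ : 0 < τ.im) (a : ℕ) (s : ℂ)
    (hs : 1 + (a : ℝ) / 2 < s.re) (n : ℕ) (hn : 0 < n) (z : ℂ)
    (hz : ∀ j k : ℤ, z ≠ (j : ℂ) + (k : ℂ) * τ) :
    ∑ j ∈ Finset.range n, ∑ k ∈ Finset.range n,
        kroneckerEisenstein τ a s ((z + (j : ℂ) + (k : ℂ) * τ) / n) =
      (n : ℂ) ^ (2 * s - (a : ℂ)) * kroneckerEisenstein τ a s z :=
  kroneckerEisenstein_distribution_general τ hτ a s hs n hn z
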